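/- arXiv:2511.00976 — 6 statements merged into one kernel-verified Lean document; each statement's English description precedes it below -/
import Mathlib

section
/- Let p ∈ [2, ∞) and k ∈ ℕ. Then there exists a constant C = C(p) > 0 such that for every ξ, η ∈ ℝ^k one has |ξ − η|^p ≤ C · | |ξ|^{(p−2)/2} ξ − |η|^{(p−2)/2} η |². -/
/-!
Write `V a = ‖a‖ ^ r • a` with `r = (p - 2) / 2`. Expanding the inner product gives
`⟪V a - V b, a - b⟫ = (‖a‖ ^ r + ‖b‖ ^ r) ‖a - b‖² / 2 + (‖a‖ ^ r - ‖b‖ ^ r)(‖a‖² - ‖b‖²) / 2`,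
whose second term is nonnegative by monotonicity of `t ↦ t ^ r`. Since `‖a - b‖ ≤ 2 max ‖a‖ ‖b‖`,
the first term is at least `2 ^ (-r - 1) ‖a - b‖ ^ (r + 2)`. Cauchy–Schwarz then yields
`‖a - b‖ ^ (p / 2) ≤ 2 ^ (p / 2) ‖V a - V b‖`, and squaring gives the claim with `C = 2 ^ p`.
-/

open Real RealInnerProductSpace

lemma rpow_sub_rpow_mul_sq_sub_sq_nonneg {r x y : ℝ} (hr : 0 ≤ r) (hx : 0 ≤ x) (hy : 0 ≤ y) :
    0 ≤ (x ^ r - y ^ r) * (x ^ 2 - y ^ 2) := by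
  rcases le_total x y with h | h
  · exact mul_nonneg_of_nonpos_of_nonpos (sub_nonpos.2 (rpow_le_rpow hx h hr))
      (sub_nonpos.2 (pow_le_pow_left₀ hx h 2))
  · exact mul_nonneg (sub_nonneg.2 (rpow_le_rpow hy h hr)) (sub_nonneg.2 (pow_le_pow_left₀ hy h 2))

lemma norm_sub_rpow_le {E : Type*} [SeminormedAddCommGroup E] {r : ℝ} (hr : 0 ≤ r) (a b : E) :
    ‖a - b‖ ^ r ≤ 2 ^ r * (‖a‖ ^ r + ‖b‖ ^ r) := by
  have hmax : ‖a - b‖ ≤ 2 * max ‖a‖ ‖b‖ := by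
    linarith [norm_sub_le a b, le_max_left ‖a‖ ‖b‖, le_max_right ‖a‖ ‖b‖]
  calc ‖a - b‖ ^ r ≤ (2 * max ‖a‖ ‖b‖) ^ r := rpow_le_rpow (norm_nonneg _) hmax hr
    _ = 2 ^ r * max ‖a‖ ‖b‖ ^ r := mul_rpow zero_le_two (le_max_of_le_left (norm_nonneg a))
    _ ≤ 2 ^ r * (‖a‖ ^ r + ‖b‖ ^ r) := by
      have ha := rpow_nonneg (norm_nonneg a) r
      have hb := rpow_nonneg (norm_nonneg b) r
      gcongr
      rcases max_choice ‖a‖ ‖b‖ with h | h <;> rw [h] <;> linarith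

section RpowSmul

variable {E : Type*} [NormedAddCommGroup E] [InnerProductSpace ℝ E]

lemma inner_rpow_smul_sub_rpow_smul (r : ℝ) (a b : E) :
    ⟪‖a‖ ^ r • a - ‖b‖ ^ r • b, a - b⟫ =
      (‖a‖ ^ r + ‖b‖ ^ r) * ‖a - b‖ ^ 2 / 2 + (‖a‖ ^ r - ‖b‖ ^ r) * (‖a‖ ^ 2 - ‖b‖ ^ 2) / 2 := by
  simp only [inner_sub_left, inner_sub_right, real_inner_smul_left, real_inner_self_eq_norm_sq,
    norm_sub_sq_real, real_inner_comm a b]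
  ring

lemma norm_sub_rpow_add_two_le_inner {r : ℝ} (hr : 0 ≤ r) (a b : E) :
    ‖a - b‖ ^ (r + 2) ≤ 2 ^ (r + 1) * ⟪‖a‖ ^ r • a - ‖b‖ ^ r • b, a - b⟫ := by
  have hsplit : ‖a - b‖ ^ (r + 2) = ‖a - b‖ ^ r * ‖a - b‖ ^ 2 := by
    exact_mod_cast rpow_add_natCast' (norm_nonneg _) (by positivity : r + (2 : ℕ) ≠ 0)
  have hmono : 0 ≤ 2 ^ r * ((‖a‖ ^ r - ‖b‖ ^ r) * (‖a‖ ^ 2 - ‖b‖ ^ 2)) :=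
    mul_nonneg (by positivity)
      (rpow_sub_rpow_mul_sq_sub_sq_nonneg hr (norm_nonneg a) (norm_nonneg b))
  have hfirst := mul_le_mul_of_nonneg_right (norm_sub_rpow_le hr a b) (sq_nonneg ‖a - b‖)
  rw [inner_rpow_smul_sub_rpow_smul, hsplit, rpow_add_one two_ne_zero]
  linarith

lemma norm_sub_rpow_add_one_le {r : ℝ} (hr : 0 ≤ r) (a b : E) :
    ‖a - b‖ ^ (r + 1) ≤ 2 ^ (r + 1) * ‖‖a‖ ^ r • a - ‖b‖ ^ r • b‖ := by
  rcases (norm_nonneg (a - b)).eq_or_lt with h | h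
  · rw [← h, zero_rpow (by positivity)]
    positivity
  · refine le_of_mul_le_mul_right ?_ h
    calc ‖a - b‖ ^ (r + 1) * ‖a - b‖ = ‖a - b‖ ^ (r + 2) := by
          rw [← rpow_add_one h.ne']; ring_nf
      _ ≤ 2 ^ (r + 1) * ⟪‖a‖ ^ r • a - ‖b‖ ^ r • b, a - b⟫ := norm_sub_rpow_add_two_le_inner hr a b
      _ ≤ 2 ^ (r + 1) * ‖‖a‖ ^ r • a - ‖b‖ ^ r • b‖ * ‖a - b‖ := by
          rw [mul_assoc]; gcongr; exact real_inner_le_norm _ _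

end RpowSmul

/-- Let `p ∈ [2, ∞)` and `k ∈ ℕ`. Then there exists a constant
`C = C(p) > 0` such that for every `ξ, η ∈ ℝ^k` one has
`|ξ − η|^p ≤ C * | |ξ|^((p−2)/2) • ξ − |η|^((p−2)/2) • η |²`. -/
theorem stmt_0 (p : ℝ) (hp : 2 ≤ p) (k : ℕ) :
    ∃ C : ℝ, 0 < C ∧ ∀ ξ η : EuclideanSpace ℝ (Fin k),
      ‖ξ - η‖ ^ p ≤
        C * ‖(‖ξ‖ ^ ((p - 2) / 2)) • ξ - (‖η‖ ^ ((p - 2) / 2)) • η‖ ^ 2 := by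
  refine ⟨2 ^ p, by positivity, fun ξ η => ?_⟩
  have key := norm_sub_rpow_add_one_le (by linarith : 0 ≤ (p - 2) / 2) ξ η
  rw [show (p - 2) / 2 + 1 = p / 2 by ring] at key
  calc ‖ξ - η‖ ^ p = (‖ξ - η‖ ^ (p / 2)) ^ 2 := by
        rw [← rpow_mul_natCast (norm_nonneg _)]; ring_nf
    _ ≤ (2 ^ (p / 2) * ‖(‖ξ‖ ^ ((p - 2) / 2)) • ξ - (‖η‖ ^ ((p - 2) / 2)) • η‖) ^ 2 := by
        gcongr
    _ = 2 ^ p * ‖(‖ξ‖ ^ ((p - 2) / 2)) • ξ - (‖η‖ ^ ((p - 2) / 2)) • η‖ ^ 2 := by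
        rw [mul_pow, ← rpow_mul_natCast zero_le_two]; ring_nf
end

section
/- Let 1 < p < ∞ and n ∈ ℕ. There exists a constant c = c(n,p) > 0 such that for every ξ, η ∈ ℝ^n with ξ ≠ η one has c^{−1} (|ξ|² + |η|²)^{(p−2)/2} ≤ | |ξ|^{(p−2)/2} ξ − |η|^{(p−2)/2} η |² / |ξ − η|² ≤ c (|ξ|² + |η|²)^{(p−2)/2}. -/
/-!
Put `s = (p - 2) / 2 > -1/2` and `V x = ‖x‖ ^ s • x`, and let `‖y‖ ≤ ‖x‖`. Both `‖V x - V y‖²`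
and `‖x - y‖²` are affine in `⟪x, y⟫ ∈ [-‖x‖‖y‖, ‖x‖‖y‖]`, so it suffices to compare them when `y`
is a nonnegative or a nonpositive multiple of `x`. There the comparison becomes
`a ^ (s + 1) ∓ b ^ (s + 1) ≍ a ^ s (a ∓ b)` for `0 ≤ b ≤ a`, which is Bernoulli's inequality after
scaling by `a`. Finally `‖x‖ ^ (2 s)` and `(‖x‖² + ‖y‖²) ^ s` agree up to the factor `2 ^ |s|`.
-/

open Real

lemma min_mul_one_sub_le_one_sub_rpow {t r : ℝ} (ht : 0 < t) (hr₀ : 0 ≤ r) (hr₁ : r ≤ 1) :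
    min t 1 * (1 - r) ≤ 1 - r ^ t := by
  rcases le_total 1 t with h | h
  · have : r ^ t ≤ r ^ (1 : ℝ) := rpow_le_rpow_of_exponent_ge' hr₀ hr₁ zero_le_one h
    rw [min_eq_right h, rpow_one] at *
    linarith
  · have := rpow_one_add_le_one_add_mul_self (s := r - 1) (by linarith) ht.le h
    rw [min_eq_left h, add_sub_cancel] at *
    linarith

lemma one_sub_rpow_le_max_mul_one_sub {t r : ℝ} (ht : 0 < t) (hr₀ : 0 ≤ r) (hr₁ : r ≤ 1) :
    1 - r ^ t ≤ max t 1 * (1 - r) := by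
  rcases le_total t 1 with h | h
  · have : r ^ (1 : ℝ) ≤ r ^ t := rpow_le_rpow_of_exponent_ge' hr₀ hr₁ ht.le h
    rw [max_eq_right h, rpow_one] at *
    linarith
  · have := one_add_mul_self_le_rpow_one_add (s := r - 1) (by linarith) h
    rw [max_eq_left h, add_sub_cancel] at *
    linarith

section RpowMulSelf

variable {s a b : ℝ}

lemma rpow_mul_self_eq_mul_div_rpow (hs : s + 1 ≠ 0) (ha : 0 < a) (hb : 0 ≤ b) :
    b ^ s * b = a ^ s * a * (b / a) ^ (s + 1) := by
  rw [← rpow_add_one' hb hs, ← rpow_add_one' ha.le hs, div_rpow hb ha.le,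
    mul_div_cancel₀ _ (rpow_pos_of_pos ha _).ne']

lemma min_mul_le_rpow_mul_self_sub (hs : 0 < s + 1) (hb : 0 ≤ b) (hba : b ≤ a) :
    min (s + 1) 1 * (a ^ s * (a - b)) ≤ a ^ s * a - b ^ s * b := by
  obtain rfl | ha := (hb.trans hba).eq_or_lt
  · obtain rfl := le_antisymm hba hb
    simp
  have key := min_mul_one_sub_le_one_sub_rpow hs (div_nonneg hb ha.le) ((div_le_one ha).2 hba)
  rw [rpow_mul_self_eq_mul_div_rpow hs.ne' ha hb]
  calc min (s + 1) 1 * (a ^ s * (a - b)) = a ^ s * a * (min (s + 1) 1 * (1 - b / a)) := by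
        field_simp
    _ ≤ a ^ s * a * (1 - (b / a) ^ (s + 1)) := by gcongr
    _ = _ := by ring

lemma rpow_mul_self_sub_le_max_mul (hs : 0 < s + 1) (hb : 0 ≤ b) (hba : b ≤ a) :
    a ^ s * a - b ^ s * b ≤ max (s + 1) 1 * (a ^ s * (a - b)) := by
  obtain rfl | ha := (hb.trans hba).eq_or_lt
  · obtain rfl := le_antisymm hba hb
    simp
  have key := one_sub_rpow_le_max_mul_one_sub hs (div_nonneg hb ha.le) ((div_le_one ha).2 hba)
  rw [rpow_mul_self_eq_mul_div_rpow hs.ne' ha hb]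
  calc a ^ s * a - a ^ s * a * (b / a) ^ (s + 1) = a ^ s * a * (1 - (b / a) ^ (s + 1)) := by
        ring
    _ ≤ a ^ s * a * (max (s + 1) 1 * (1 - b / a)) := by gcongr
    _ = _ := by field_simp

lemma rpow_mul_self_le_rpow_mul_self (hs : 0 < s + 1) (hb : 0 ≤ b) (hba : b ≤ a) :
    b ^ s * b ≤ a ^ s * a := by
  rw [← rpow_add_one' hb hs.ne', ← rpow_add_one' (hb.trans hba) hs.ne']
  exact rpow_le_rpow hb hba hs.le

variable {k : ℝ}

lemma rpow_mul_self_sub_sq_bounds (hs : 0 < s + 1) (hk₁ : s + 1 ≤ k) (hk₂ : (s + 1)⁻¹ ≤ k)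
    (hk₃ : 1 ≤ k) (hb : 0 ≤ b) (hba : b ≤ a) :
    (k⁻¹) ^ 2 * (a ^ s * (a - b)) ^ 2 ≤ (a ^ s * a - b ^ s * b) ^ 2 ∧
      (a ^ s * a - b ^ s * b) ^ 2 ≤ k ^ 2 * (a ^ s * (a - b)) ^ 2 := by
  have hD : 0 ≤ a ^ s * (a - b) := mul_nonneg (rpow_nonneg (hb.trans hba) s) (by linarith)
  have hd : 0 ≤ k⁻¹ * (a ^ s * (a - b)) := mul_nonneg (by positivity) hD
  have hlo : k⁻¹ * (a ^ s * (a - b)) ≤ a ^ s * a - b ^ s * b :=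
    (mul_le_mul_of_nonneg_right (le_min ((inv_le_comm₀ (by linarith) hs).2 hk₂)
      (inv_le_one_of_one_le₀ hk₃)) hD).trans (min_mul_le_rpow_mul_self_sub hs hb hba)
  have hup : a ^ s * a - b ^ s * b ≤ k * (a ^ s * (a - b)) :=
    (rpow_mul_self_sub_le_max_mul hs hb hba).trans
      (mul_le_mul_of_nonneg_right (max_le hk₁ hk₃) hD)
  rw [← mul_pow, ← mul_pow]
  exact ⟨pow_le_pow_left₀ hd hlo 2, pow_le_pow_left₀ (hd.trans hlo) hup 2⟩

lemma rpow_mul_self_add_sq_bounds (hs : 0 < s + 1) (hk : 2 ≤ k) (hb : 0 ≤ b) (hba : b ≤ a) :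
    (k⁻¹) ^ 2 * (a ^ s * (a + b)) ^ 2 ≤ (a ^ s * a + b ^ s * b) ^ 2 ∧
      (a ^ s * a + b ^ s * b) ^ 2 ≤ k ^ 2 * (a ^ s * (a + b)) ^ 2 := by
  have hA : 0 ≤ a ^ s := rpow_nonneg (hb.trans hba) s
  have hB : 0 ≤ b ^ s * b := mul_nonneg (rpow_nonneg hb s) hb
  have hBA := rpow_mul_self_le_rpow_mul_self hs hb hba
  have hk₀ : 0 < k := by linarith
  have hlo : k⁻¹ * (a ^ s * (a + b)) ≤ a ^ s * a + b ^ s * b := by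
    have : k⁻¹ ≤ 2⁻¹ := inv_anti₀ two_pos hk
    nlinarith [mul_le_mul_of_nonneg_left hba hA, mul_nonneg hA hb]
  have hup : a ^ s * a + b ^ s * b ≤ k * (a ^ s * (a + b)) := by
    nlinarith [mul_nonneg hA hb, mul_nonneg hA (hb.trans hba)]
  rw [← mul_pow, ← mul_pow]
  have hd : 0 ≤ k⁻¹ * (a ^ s * (a + b)) :=
    mul_nonneg (by positivity) (mul_nonneg hA (by linarith))
  exact ⟨pow_le_pow_left₀ hd hlo 2, pow_le_pow_left₀ (hd.trans hlo) hup 2⟩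

end RpowMulSelf

lemma rpow_le_mul_rpow_of_le_of_le_mul {x y c s : ℝ} (hx : 0 < x) (hxy : x ≤ y)
    (hyc : y ≤ c * x) : y ^ s ≤ c ^ |s| * x ^ s ∧ x ^ s ≤ c ^ |s| * y ^ s := by
  have hy : 0 < y := hx.trans_le hxy
  have hc : 1 ≤ c := le_of_mul_le_mul_right (by linarith) hx
  rcases le_total 0 s with hs | hs
  · rw [abs_of_nonneg hs]
    refine ⟨?_, ?_⟩
    · rw [← mul_rpow (by linarith) hx.le]
      exact rpow_le_rpow hy.le hyc hs
    · calc x ^ s ≤ y ^ s := rpow_le_rpow hx.le hxy hs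
        _ ≤ c ^ s * y ^ s := le_mul_of_one_le_left (by positivity) (one_le_rpow hc hs)
  · rw [abs_of_nonpos hs]
    refine ⟨?_, ?_⟩
    · calc y ^ s ≤ x ^ s := rpow_le_rpow_of_nonpos hx hxy hs
        _ ≤ c ^ (-s) * x ^ s :=
          le_mul_of_one_le_left (by positivity) (one_le_rpow hc (by linarith))
    · have hyc' : y / c ≤ x := (div_le_iff₀ (by linarith)).2 (by linarith)
      calc x ^ s ≤ (y / c) ^ s := rpow_le_rpow_of_nonpos (by positivity) hyc' hs
        _ = c ^ (-s) * y ^ s := by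
          rw [div_rpow hy.le (by linarith), rpow_neg (by linarith), div_eq_inv_mul]

lemma add_mul_nonneg_of_abs_le {α β r u : ℝ} (hadd : 0 ≤ α + β * r) (hsub : 0 ≤ α - β * r)
    (hu : |u| ≤ r) : 0 ≤ α + β * u := by
  obtain ⟨hu₁, hu₂⟩ := abs_le.1 hu
  rcases le_total 0 β with hβ | hβ <;> nlinarith

section InnerProductSpace

open scoped InnerProductSpace

variable {E : Type*} [NormedAddCommGroup E] [InnerProductSpace ℝ E]

lemma norm_smul_sub_smul_sq (A B : ℝ) (x y : E) :
    ‖A • x - B • y‖ ^ 2 = A ^ 2 * ‖x‖ ^ 2 - 2 * (A * B) * ⟪x, y⟫_ℝ + B ^ 2 * ‖y‖ ^ 2 := by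
  rw [norm_sub_sq_real, norm_smul, norm_smul, real_inner_smul_left, real_inner_smul_right,
    mul_pow, mul_pow, Real.norm_eq_abs, Real.norm_eq_abs, sq_abs, sq_abs]
  ring

lemma norm_smul_sub_smul_sq_le {A B K : ℝ} {x y : E}
    (hsub : (A * ‖x‖ - B * ‖y‖) ^ 2 ≤ K * (‖x‖ - ‖y‖) ^ 2)
    (hadd : (A * ‖x‖ + B * ‖y‖) ^ 2 ≤ K * (‖x‖ + ‖y‖) ^ 2) :
    ‖A • x - B • y‖ ^ 2 ≤ K * ‖x - y‖ ^ 2 := by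
  have := add_mul_nonneg_of_abs_le
    (α := K * (‖x‖ ^ 2 + ‖y‖ ^ 2) - A ^ 2 * ‖x‖ ^ 2 - B ^ 2 * ‖y‖ ^ 2) (β := 2 * (A * B - K))
    (by linear_combination hsub) (by linear_combination hadd) (abs_real_inner_le_norm x y)
  rw [norm_smul_sub_smul_sq, ← sub_nonneg, norm_sub_sq_real]
  linear_combination this

lemma le_norm_smul_sub_smul_sq {A B K : ℝ} {x y : E}
    (hsub : K * (‖x‖ - ‖y‖) ^ 2 ≤ (A * ‖x‖ - B * ‖y‖) ^ 2)
    (hadd : K * (‖x‖ + ‖y‖) ^ 2 ≤ (A * ‖x‖ + B * ‖y‖) ^ 2) :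
    K * ‖x - y‖ ^ 2 ≤ ‖A • x - B • y‖ ^ 2 := by
  have := add_mul_nonneg_of_abs_le
    (α := A ^ 2 * ‖x‖ ^ 2 + B ^ 2 * ‖y‖ ^ 2 - K * (‖x‖ ^ 2 + ‖y‖ ^ 2)) (β := 2 * (K - A * B))
    (by linear_combination hsub) (by linear_combination hadd) (abs_real_inner_le_norm x y)
  rw [norm_smul_sub_smul_sq, ← sub_nonneg, norm_sub_sq_real]
  linear_combination this

variable {s k : ℝ}

lemma norm_rpow_smul_sub_sq_bounds_of_norm_le (hs : 0 < s + 1) (hk₁ : s + 1 ≤ k)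
    (hk₂ : (s + 1)⁻¹ ≤ k) (hk₃ : 2 ≤ k) {x y : E} (hyx : ‖y‖ ≤ ‖x‖) :
    (k⁻¹) ^ 2 * (‖x‖ ^ s) ^ 2 * ‖x - y‖ ^ 2 ≤ ‖(‖x‖ ^ s) • x - (‖y‖ ^ s) • y‖ ^ 2 ∧
      ‖(‖x‖ ^ s) • x - (‖y‖ ^ s) • y‖ ^ 2 ≤ k ^ 2 * (‖x‖ ^ s) ^ 2 * ‖x - y‖ ^ 2 := by
  obtain ⟨hsub₁, hsub₂⟩ :=
    rpow_mul_self_sub_sq_bounds hs hk₁ hk₂ (by linarith) (norm_nonneg y) hyx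
  obtain ⟨hadd₁, hadd₂⟩ := rpow_mul_self_add_sq_bounds hs hk₃ (norm_nonneg y) hyx
  exact ⟨le_norm_smul_sub_smul_sq (by linear_combination hsub₁) (by linear_combination hadd₁),
    norm_smul_sub_smul_sq_le (by linear_combination hsub₂) (by linear_combination hadd₂)⟩

lemma norm_rpow_smul_sub_sq_bounds (hs : 0 < s + 1) (hk₁ : s + 1 ≤ k)
    (hk₂ : (s + 1)⁻¹ ≤ k) (hk₃ : 2 ≤ k) (x y : E) :
    (2 ^ |s| * k ^ 2)⁻¹ * (‖x‖ ^ 2 + ‖y‖ ^ 2) ^ s * ‖x - y‖ ^ 2 ≤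
        ‖(‖x‖ ^ s) • x - (‖y‖ ^ s) • y‖ ^ 2 ∧
      ‖(‖x‖ ^ s) • x - (‖y‖ ^ s) • y‖ ^ 2 ≤
        2 ^ |s| * k ^ 2 * (‖x‖ ^ 2 + ‖y‖ ^ 2) ^ s * ‖x - y‖ ^ 2 := by
  wlog hyx : ‖y‖ ≤ ‖x‖ generalizing x y
  · rw [norm_sub_rev x y, norm_sub_rev (_ • x), add_comm (‖x‖ ^ 2)]
    exact this y x (le_of_not_ge hyx)
  obtain hx | hx := (norm_nonneg x).eq_or_lt
  · obtain rfl : x = 0 := norm_eq_zero.1 hx.symm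
    obtain rfl : y = 0 := norm_le_zero_iff.1 (hx ▸ hyx)
    simp
  obtain ⟨hlo, hup⟩ := norm_rpow_smul_sub_sq_bounds_of_norm_le hs hk₁ hk₂ hk₃ hyx
  obtain ⟨hS, hx₂⟩ := rpow_le_mul_rpow_of_le_of_le_mul (s := s) (c := 2) (pow_pos hx 2)
    (le_add_of_nonneg_right (sq_nonneg ‖y‖)) (by nlinarith [norm_nonneg y])
  rw [rpow_pow_comm (norm_nonneg x)] at hlo hup
  have hS' : (2 ^ |s|)⁻¹ * (‖x‖ ^ 2 + ‖y‖ ^ 2) ^ s ≤ (‖x‖ ^ 2) ^ s :=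
    (inv_mul_le_iff₀ (by positivity)).2 hS
  constructor
  · calc (2 ^ |s| * k ^ 2)⁻¹ * (‖x‖ ^ 2 + ‖y‖ ^ 2) ^ s * ‖x - y‖ ^ 2
        = k⁻¹ ^ 2 * ((2 ^ |s|)⁻¹ * (‖x‖ ^ 2 + ‖y‖ ^ 2) ^ s) * ‖x - y‖ ^ 2 := by ring
      _ ≤ k⁻¹ ^ 2 * (‖x‖ ^ 2) ^ s * ‖x - y‖ ^ 2 := by gcongr
      _ ≤ _ := hlo
  · calc _ ≤ k ^ 2 * (‖x‖ ^ 2) ^ s * ‖x - y‖ ^ 2 := hup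
      _ ≤ k ^ 2 * (2 ^ |s| * (‖x‖ ^ 2 + ‖y‖ ^ 2) ^ s) * ‖x - y‖ ^ 2 := by gcongr
      _ = _ := by ring

end InnerProductSpace

/-- Let `1 < p < ∞` and `n ∈ ℕ`. There is a constant `c = c(n,p) > 0`
such that for every `ξ ≠ η` in `ℝ^n`,
`c⁻¹ (|ξ|² + |η|²)^((p−2)/2) ≤ | |ξ|^((p−2)/2) ξ − |η|^((p−2)/2) η |² / |ξ − η|²
  ≤ c (|ξ|² + |η|²)^((p−2)/2)`. -/
theorem stmt_1 (n : ℕ) (p : ℝ) (hp : 1 < p) :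
    ∃ c : ℝ, 0 < c ∧ ∀ ξ η : EuclideanSpace ℝ (Fin n), ξ ≠ η →
      c⁻¹ * (‖ξ‖ ^ 2 + ‖η‖ ^ 2) ^ ((p - 2) / 2) ≤
        ‖(‖ξ‖ ^ ((p - 2) / 2)) • ξ - (‖η‖ ^ ((p - 2) / 2)) • η‖ ^ 2 / ‖ξ - η‖ ^ 2 ∧
      ‖(‖ξ‖ ^ ((p - 2) / 2)) • ξ - (‖η‖ ^ ((p - 2) / 2)) • η‖ ^ 2 / ‖ξ - η‖ ^ 2 ≤
        c * (‖ξ‖ ^ 2 + ‖η‖ ^ 2) ^ ((p - 2) / 2) := by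
  set s := (p - 2) / 2
  have hs : 0 < s + 1 := by simp only [s]; linarith
  set k := max (max (s + 1) (s + 1)⁻¹) 2
  refine ⟨2 ^ |s| * k ^ 2, by positivity, fun ξ η hne => ?_⟩
  have hd : 0 < ‖ξ - η‖ ^ 2 := pow_pos (norm_pos_iff.2 (sub_ne_zero.2 hne)) 2
  obtain ⟨hlo, hup⟩ := norm_rpow_smul_sub_sq_bounds hs (le_max_of_le_left (le_max_left _ _))
    (le_max_of_le_left (le_max_right _ _)) (le_max_right _ _) ξ η
  exact ⟨(le_div_iff₀ hd).2 hlo, (div_le_iff₀ hd).2 hup⟩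
end

section
/- Let p ∈ (1, ∞) and n ∈ ℕ. There exists a constant c = c(n,p) > 0 such that for every ξ, η ∈ ℝ^n one has ⟨H_{p−1}(ξ) − H_{p−1}(η), ξ − η⟩ ≥ c · |H_{p/2}(ξ) − H_{p/2}(η)|². -/
/-!
Write `x = H₁ ξ` for the shrinking of `ξ` by the unit ball, so that `H_γ ξ = |x|^(γ-1) x`. The
left-hand side splits as `⟨H_{p-1} ξ - H_{p-1} η, x - y⟩` plus the pairing of
`H_{p-1} ξ - H_{p-1} η` with `(ξ - x) - (η - y)`. The second term is nonnegative by
Cauchy–Schwarz, because `ξ - x` has norm at most `1` and points in the direction of `H_{p-1} ξ`.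
The first is the classical monotonicity inequality for `x ↦ |x|^(p-2) x`. It is affine in
`⟨x, y⟩`, so it suffices to check it at `⟨x, y⟩ = ±|x| |y|`. The minus sign is trivial; the plus
sign is the scalar inequality `c (a^(p/2) - b^(p/2))² ≤ (a^(p-1) - b^(p-1)) (a - b)`, which after
scaling to `b = s a` with `0 ≤ s ≤ 1` follows from the Bernoulli-type bounds
`min 1 q * (1 - s) ≤ 1 - s^q ≤ max 1 q * (1 - s)`.
-/

open scoped InnerProductSpace

/-- The map `H_γ : ℝ^n → ℝ^n`, `H_γ(ξ) = (|ξ|−1)₊^γ · ξ/|ξ|` for `ξ ≠ 0`, `H_γ(0) = 0`. -/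
noncomputable def Hfun {n : ℕ} (γ : ℝ) (ξ : EuclideanSpace ℝ (Fin n)) :
    EuclideanSpace ℝ (Fin n) :=
  open Classical in
  if ξ = (0 : EuclideanSpace ℝ (Fin n)) then 0 else (max (‖ξ‖ - 1) 0) ^ γ • ‖ξ‖⁻¹ • ξ

namespace Real

theorem one_sub_rpow_le_max_mul {s : ℝ} (q : ℝ) (hs₀ : 0 ≤ s) (hs₁ : s ≤ 1) :
    1 - s ^ q ≤ max 1 q * (1 - s) := by
  rcases le_total q 1 with hq1 | hq1
  · have := self_le_rpow_of_le_one hs₀ hs₁ hq1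
    nlinarith [le_max_left 1 q]
  · have := one_add_mul_self_le_rpow_one_add (s := s - 1) (by linarith) hq1
    rw [add_sub_cancel] at this
    nlinarith [le_max_right 1 q]

theorem min_mul_le_one_sub_rpow {s q : ℝ} (hs₀ : 0 ≤ s) (hs₁ : s ≤ 1) (hq : 0 < q) :
    min 1 q * (1 - s) ≤ 1 - s ^ q := by
  rcases le_total q 1 with hq1 | hq1
  · have := rpow_one_add_le_one_add_mul_self (s := s - 1) (by linarith) hq.le hq1
    rw [add_sub_cancel] at this
    nlinarith [min_le_right 1 q]
  · have := rpow_le_self_of_le_one hs₀ hs₁ hq1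
    nlinarith [min_le_left 1 q]

end Real

noncomputable def monotonicityConst (p : ℝ) : ℝ := min 1 (p - 1) / max 1 (p / 2) ^ 2

theorem monotonicityConst_pos {p : ℝ} (hp : 1 < p) : 0 < monotonicityConst p :=
  div_pos (lt_min one_pos (by linarith)) (by positivity)

theorem monotonicityConst_le_one (p : ℝ) : monotonicityConst p ≤ 1 := by
  rw [monotonicityConst, div_le_one (by positivity)]
  nlinarith [min_le_left 1 (p - 1), le_max_left 1 (p / 2)]

theorem monotonicityConst_mul_sq_one_sub_rpow_le {p s : ℝ} (hp : 1 < p) (hs₀ : 0 ≤ s)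
    (hs₁ : s ≤ 1) :
    monotonicityConst p * (1 - s ^ (p / 2)) ^ 2 ≤ (1 - s ^ (p - 1)) * (1 - s) := by
  have upper := Real.one_sub_rpow_le_max_mul (p / 2) hs₀ hs₁
  have lower := Real.min_mul_le_one_sub_rpow hs₀ hs₁ (by linarith : 0 < p - 1)
  have hnonneg : 0 ≤ 1 - s ^ (p / 2) :=
    sub_nonneg.2 (Real.rpow_le_one hs₀ hs₁ (by positivity))
  calc monotonicityConst p * (1 - s ^ (p / 2)) ^ 2
      ≤ monotonicityConst p * (max 1 (p / 2) * (1 - s)) ^ 2 := by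
        gcongr
        exact (monotonicityConst_pos hp).le
    _ = min 1 (p - 1) * (1 - s) * (1 - s) := by
        rw [monotonicityConst]; field_simp
    _ ≤ (1 - s ^ (p - 1)) * (1 - s) := by gcongr

theorem monotonicityConst_mul_sq_rpow_sub_le {p a b : ℝ} (hp : 1 < p) (ha : 0 ≤ a) (hb : 0 ≤ b) :
    monotonicityConst p * (a ^ (p / 2) - b ^ (p / 2)) ^ 2 ≤
      (a ^ (p - 1) - b ^ (p - 1)) * (a - b) := by
  wlog hba : b ≤ a generalizing a b
  · have := this hb ha (le_of_not_ge hba)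
    linarith
  rcases ha.eq_or_lt with rfl | ha
  · obtain rfl : b = 0 := le_antisymm hba hb
    simp
  obtain ⟨s, hs₀, hs₁, rfl⟩ : ∃ s, 0 ≤ s ∧ s ≤ 1 ∧ b = a * s :=
    ⟨b / a, div_nonneg hb ha.le, (div_le_one ha).2 hba, by field_simp⟩
  have hsq : (a ^ (p / 2)) ^ 2 = a ^ (p - 1) * a := by
    rw [← Real.rpow_mul_natCast ha.le, ← Real.rpow_add_one ha.ne']
    ring_nf
  have key := monotonicityConst_mul_sq_one_sub_rpow_le hp hs₀ hs₁
  rw [Real.mul_rpow ha.le hs₀, Real.mul_rpow ha.le hs₀]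
  calc monotonicityConst p * (a ^ (p / 2) - a ^ (p / 2) * s ^ (p / 2)) ^ 2
      = (a ^ (p - 1) * a) * (monotonicityConst p * (1 - s ^ (p / 2)) ^ 2) := by
        rw [← hsq]; ring
    _ ≤ (a ^ (p - 1) * a) * ((1 - s ^ (p - 1)) * (1 - s)) := by gcongr
    _ = (a ^ (p - 1) - a ^ (p - 1) * s ^ (p - 1)) * (a - a * s) := by ring

theorem monotonicityConst_div_two_mul_norm_sq_le_inner {E : Type*} [NormedAddCommGroup E]
    [InnerProductSpace ℝ E] {p : ℝ} (hp : 1 < p) (x y : E) :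
    monotonicityConst p / 2 * ‖‖x‖ ^ (p / 2 - 1) • x - ‖y‖ ^ (p / 2 - 1) • y‖ ^ 2 ≤
      ⟪‖x‖ ^ (p - 2) • x - ‖y‖ ^ (p - 2) • y, x - y⟫_ℝ := by
  have rpow_eq : ∀ t : ℝ, 0 ≤ t → t ^ (p - 2) = (t ^ (p / 2 - 1)) ^ 2 ∧
      t ^ (p / 2) = t ^ (p / 2 - 1) * t ∧ t ^ (p - 1) = (t ^ (p / 2 - 1)) ^ 2 * t := by
    intro t ht
    have h₂ : t ^ (p - 2) = (t ^ (p / 2 - 1)) ^ 2 := by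
      rw [← Real.rpow_mul_natCast ht]; ring_nf
    refine ⟨h₂, ?_, ?_⟩
    · rw [← Real.rpow_add_one' ht (by linarith), sub_add_cancel]
    · rw [← h₂, ← Real.rpow_add_one' ht (by linarith)]; ring_nf
  obtain ⟨hx₂, hx₁, hx₀⟩ := rpow_eq ‖x‖ (norm_nonneg x)
  obtain ⟨hy₂, hy₁, hy₀⟩ := rpow_eq ‖y‖ (norm_nonneg y)
  have scalar := monotonicityConst_mul_sq_rpow_sub_le hp (norm_nonneg x) (norm_nonneg y)
  rw [hx₁, hy₁, hx₀, hy₀] at scalar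
  have hS : |⟪x, y⟫_ℝ| ≤ ‖x‖ * ‖y‖ := abs_real_inner_le_norm x y
  rw [← real_inner_self_eq_norm_sq]
  simp only [inner_sub_left, inner_sub_right, real_inner_smul_left, real_inner_smul_right,
    real_inner_comm x y]
  simp only [real_inner_self_eq_norm_sq, hx₂, hy₂]
  set c := monotonicityConst p
  set A := ‖x‖ ^ (p / 2 - 1)
  set B := ‖y‖ ^ (p / 2 - 1)
  set a := ‖x‖
  set b := ‖y‖
  set S := ⟪x, y⟫_ℝ
  have hc := monotonicityConst_pos hp
  have hc₁ := monotonicityConst_le_one p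
  have hk : |(A ^ 2 + B ^ 2 - c * A * B) * (a * b)| ≤
      (1 - c / 2) * (A ^ 2 * a ^ 2 + B ^ 2 * b ^ 2) := by
    rw [abs_le]
    constructor
    · nlinarith [mul_nonneg hc.le (sq_nonneg (A * a - B * b)),
        mul_nonneg (sub_nonneg.2 hc₁) (add_nonneg (sq_nonneg (A * a)) (sq_nonneg (B * b))),
        mul_nonneg (add_nonneg (sq_nonneg A) (sq_nonneg B))
          (mul_nonneg (norm_nonneg x) (norm_nonneg y))]
    · nlinarith [sq_nonneg (A * a - B * b)]
  have hkS : (A ^ 2 + B ^ 2 - c * A * B) * S ≤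
      (1 - c / 2) * (A ^ 2 * a ^ 2 + B ^ 2 * b ^ 2) :=
    calc (A ^ 2 + B ^ 2 - c * A * B) * S ≤ |A ^ 2 + B ^ 2 - c * A * B| * |S| := by
          rw [← abs_mul]; exact le_abs_self _
      _ ≤ |A ^ 2 + B ^ 2 - c * A * B| * (a * b) :=
          mul_le_mul_of_nonneg_left hS (abs_nonneg _)
      _ = |(A ^ 2 + B ^ 2 - c * A * B) * (a * b)| := by
          rw [abs_mul, abs_of_nonneg (mul_nonneg (norm_nonneg x) (norm_nonneg y))]
      _ ≤ _ := hk
  linear_combination hkS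

theorem real_inner_sub_sub_nonneg_of_inner_eq_norm {E : Type*} [NormedAddCommGroup E]
    [InnerProductSpace ℝ E] {P Q u v : E} (hu : ‖u‖ ≤ 1) (hv : ‖v‖ ≤ 1)
    (hPu : ⟪P, u⟫_ℝ = ‖P‖) (hQv : ⟪Q, v⟫_ℝ = ‖Q‖) : 0 ≤ ⟪P - Q, u - v⟫_ℝ := by
  have hPv : ⟪P, v⟫_ℝ ≤ ‖P‖ :=
    (real_inner_le_norm P v).trans (mul_le_of_le_one_right (norm_nonneg P) hv)
  have hQu : ⟪Q, u⟫_ℝ ≤ ‖Q‖ :=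
    (real_inner_le_norm Q u).trans (mul_le_of_le_one_right (norm_nonneg Q) hu)
  simp only [inner_sub_left, inner_sub_right]
  linarith

namespace Hfun

variable {n : ℕ} {γ : ℝ} {ξ : EuclideanSpace ℝ (Fin n)}

theorem of_norm_le_one (hγ : γ ≠ 0) (h : ‖ξ‖ ≤ 1) : Hfun γ ξ = 0 := by
  rw [Hfun, max_eq_right (by linarith), Real.zero_rpow hγ, zero_smul, ite_self]

theorem of_one_lt_norm (h : 1 < ‖ξ‖) : Hfun γ ξ = (‖ξ‖ - 1) ^ γ • ‖ξ‖⁻¹ • ξ := by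
  have hξ : ξ ≠ 0 := norm_pos_iff.1 (by linarith)
  rw [Hfun, if_neg hξ, max_eq_left (by linarith)]

theorem self_sub_one_of_one_lt_norm (h : 1 < ‖ξ‖) : ξ - Hfun 1 ξ = ‖ξ‖⁻¹ • ξ := by
  have hN : ‖ξ‖ ≠ 0 := by linarith
  rw [of_one_lt_norm h, Real.rpow_one, smul_smul]
  nth_rewrite 1 [← one_smul ℝ ξ]
  rw [← sub_smul]
  congr 1
  field_simp
  ring

theorem norm_self_sub_one_le : ‖ξ - Hfun 1 ξ‖ ≤ 1 := by
  rcases le_or_gt ‖ξ‖ 1 with h | h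
  · rwa [of_norm_le_one one_ne_zero h, sub_zero]
  · rw [self_sub_one_of_one_lt_norm h]
    simpa using (norm_smul_inv_norm (𝕜 := ℝ) (norm_pos_iff.1 (by linarith))).le

theorem inner_self_sub_one_eq_norm (hγ : γ ≠ 0) : ⟪Hfun γ ξ, ξ - Hfun 1 ξ⟫_ℝ = ‖Hfun γ ξ‖ := by
  rcases le_or_gt ‖ξ‖ 1 with h | h
  · rw [of_norm_le_one hγ h, inner_zero_left, norm_zero]
  · have he : ‖‖ξ‖⁻¹ • ξ‖ = 1 := by
      simpa using norm_smul_inv_norm (𝕜 := ℝ) (norm_pos_iff.1 (by linarith))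
    have ht : 0 ≤ (‖ξ‖ - 1) ^ γ := Real.rpow_nonneg (by linarith) γ
    rw [self_sub_one_of_one_lt_norm h, of_one_lt_norm h, real_inner_smul_left,
      real_inner_self_eq_norm_sq, he, norm_smul, he, Real.norm_of_nonneg ht, one_pow]

theorem eq_rpow_smul_one (hγ : γ ≠ 0) : Hfun γ ξ = ‖Hfun 1 ξ‖ ^ (γ - 1) • Hfun 1 ξ := by
  rcases le_or_gt ‖ξ‖ 1 with h | h
  · rw [of_norm_le_one hγ h, of_norm_le_one one_ne_zero h, smul_zero]
  · have hN : 0 < ‖ξ‖ - 1 := by linarith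
    have hnorm : ‖Hfun 1 ξ‖ = ‖ξ‖ - 1 := by
      rw [of_one_lt_norm h, Real.rpow_one, norm_smul, norm_smul, norm_inv, norm_norm,
        Real.norm_of_nonneg hN.le, inv_mul_cancel₀ (by linarith), mul_one]
    rw [hnorm, of_one_lt_norm h, of_one_lt_norm h, Real.rpow_one,
      smul_smul (_ ^ (γ - 1)), ← Real.rpow_add_one hN.ne', sub_add_cancel]

end Hfun

/-- Let `p ∈ (1, ∞)` and `n ∈ ℕ`. There exists `c = c(n,p) > 0` such
that for every `ξ, η ∈ ℝ^n`,
`⟨H_{p−1}(ξ) − H_{p−1}(η), ξ − η⟩ ≥ c · |H_{p/2}(ξ) − H_{p/2}(η)|²`. -/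
theorem stmt_2 (n : ℕ) (p : ℝ) (hp1 : 1 < p) :
    ∃ c : ℝ, 0 < c ∧ ∀ ξ η : EuclideanSpace ℝ (Fin n),
      ⟪Hfun (p - 1) ξ - Hfun (p - 1) η, ξ - η⟫_ℝ ≥
        c * ‖Hfun (p / 2) ξ - Hfun (p / 2) η‖ ^ 2 := by
  refine ⟨monotonicityConst p / 2, half_pos (monotonicityConst_pos hp1), fun ξ η => ?_⟩
  have hp₁ : p - 1 ≠ 0 := by linarith
  have hp₂ : p / 2 ≠ 0 := by positivity
  have outer : 0 ≤ ⟪Hfun (p - 1) ξ - Hfun (p - 1) η, (ξ - Hfun 1 ξ) - (η - Hfun 1 η)⟫_ℝ :=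
    real_inner_sub_sub_nonneg_of_inner_eq_norm Hfun.norm_self_sub_one_le Hfun.norm_self_sub_one_le
      (Hfun.inner_self_sub_one_eq_norm hp₁) (Hfun.inner_self_sub_one_eq_norm hp₁)
  have core := monotonicityConst_div_two_mul_norm_sq_le_inner hp1 (Hfun 1 ξ) (Hfun 1 η)
  rw [← Hfun.eq_rpow_smul_one hp₂, ← Hfun.eq_rpow_smul_one hp₂, show p - 2 = p - 1 - 1 by ring,
    ← Hfun.eq_rpow_smul_one hp₁, ← Hfun.eq_rpow_smul_one hp₁] at core
  calc ⟪Hfun (p - 1) ξ - Hfun (p - 1) η, ξ - η⟫_ℝ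
      = ⟪Hfun (p - 1) ξ - Hfun (p - 1) η, Hfun 1 ξ - Hfun 1 η⟫_ℝ +
          ⟪Hfun (p - 1) ξ - Hfun (p - 1) η, (ξ - Hfun 1 ξ) - (η - Hfun 1 η)⟫_ℝ := by
        rw [← inner_add_right]; congr 1; abel
    _ ≥ monotonicityConst p / 2 * ‖Hfun (p / 2) ξ - Hfun (p / 2) η‖ ^ 2 := by linarith
end

section
/- Let 2 ≤ p < ∞ and n ∈ ℕ. Then for every ξ, η ∈ ℝ^n one has |H_{p−1}(ξ) − H_{p−1}(η)| ≤ (p−1) · ( |H_{p/2}(ξ)|^{(p−2)/p} + |H_{p/2}(η)|^{(p−2)/p} ) · |H_{p/2}(ξ) − H_{p/2}(η)|. -/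
open Real

/-- Scalar concavity bound: for `0 ≤ α ≤ 1`, `0 < y ≤ x`,
`(x^α − y^α) * y ≤ α * y^α * (x − y)`. -/
lemma scalar_key {α x y : ℝ} (h0 : 0 ≤ α) (h1 : α ≤ 1) (hy : 0 < y) (hxy : y ≤ x) :
    (x ^ α - y ^ α) * y ≤ α * y ^ α * (x - y) := by
  have hx : 0 < x := lt_of_lt_of_le hy hxy
  have hs : (-1 : ℝ) ≤ x / y - 1 := by
    have : 0 ≤ x / y := by positivity
    linarith
  have hB : (1 + (x / y - 1)) ^ α ≤ 1 + α * (x / y - 1) :=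
    rpow_one_add_le_one_add_mul_self hs h0 h1
  have hxy' : x = y * (x / y) := by field_simp
  have hmul : x ^ α = y ^ α * (x / y) ^ α := by
    rw [← Real.mul_rpow hy.le (by positivity : (0:ℝ) ≤ x / y)]
    congr 1
  have h2 : x ^ α ≤ y ^ α * (1 + α * (x / y - 1)) := by
    rw [hmul]
    have hy0 : (0:ℝ) ≤ y ^ α := by positivity
    have hxyα : (x / y) ^ α ≤ 1 + α * (x / y - 1) := by
      have := hB; rwa [add_sub_cancel] at this
    exact mul_le_mul_of_nonneg_left hxyα hy0
  have h3 : (x ^ α - y ^ α) * y ≤ (y ^ α * (1 + α * (x / y - 1)) - y ^ α) * y := by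
    apply mul_le_mul_of_nonneg_right _ hy.le
    linarith
  have hyne : y ≠ 0 := hy.ne'
  calc (x ^ α - y ^ α) * y ≤ (y ^ α * (1 + α * (x / y - 1)) - y ^ α) * y := h3
    _ = α * y ^ α * (x - y) := by field_simp; ring

/-- Key vector inequality, WLOG version: `‖b‖ ≤ ‖a‖`. -/
lemma vec_key_aux {E : Type*} [NormedAddCommGroup E] [NormedSpace ℝ E]
    {α : ℝ} (h0 : 0 ≤ α) (h1 : α ≤ 1) (a b : E) (hba : ‖b‖ ≤ ‖a‖) :
    ‖(‖a‖ ^ α) • a - (‖b‖ ^ α) • b‖ ≤ (1 + α) * max ‖a‖ ‖b‖ ^ α * ‖a - b‖ := by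
  have hsplit : (‖a‖ ^ α) • a - (‖b‖ ^ α) • b
      = (‖a‖ ^ α) • (a - b) + (‖a‖ ^ α - ‖b‖ ^ α) • b := by module
  have hpow : ‖b‖ ^ α ≤ ‖a‖ ^ α := Real.rpow_le_rpow (norm_nonneg b) hba h0
  have hmax : max ‖a‖ ‖b‖ = ‖a‖ := max_eq_left hba
  have h4 : ‖(‖a‖ ^ α) • a - (‖b‖ ^ α) • b‖
      ≤ ‖a‖ ^ α * ‖a - b‖ + (‖a‖ ^ α - ‖b‖ ^ α) * ‖b‖ := by
    rw [hsplit]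
    refine (norm_add_le _ _).trans ?_
    rw [norm_smul, norm_smul, Real.norm_eq_abs, Real.norm_eq_abs,
      abs_of_nonneg (by positivity), abs_of_nonneg (by linarith)]
  have h5 : (‖a‖ ^ α - ‖b‖ ^ α) * ‖b‖ ≤ α * ‖a‖ ^ α * ‖a - b‖ := by
    rcases eq_or_lt_of_le (norm_nonneg b) with hb0 | hb0
    · rw [← hb0, mul_zero]; positivity
    · calc (‖a‖ ^ α - ‖b‖ ^ α) * ‖b‖ ≤ α * ‖b‖ ^ α * (‖a‖ - ‖b‖) :=
          scalar_key h0 h1 hb0 hba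
        _ ≤ α * ‖a‖ ^ α * ‖a - b‖ := by
          have h6 : ‖a‖ - ‖b‖ ≤ ‖a - b‖ := norm_sub_norm_le a b
          have h7 : (0:ℝ) ≤ ‖a‖ - ‖b‖ := by linarith
          have h8 : α * ‖b‖ ^ α ≤ α * ‖a‖ ^ α := mul_le_mul_of_nonneg_left hpow h0
          have h9 : (0:ℝ) ≤ α * ‖a‖ ^ α := by positivity
          calc α * ‖b‖ ^ α * (‖a‖ - ‖b‖) ≤ α * ‖a‖ ^ α * (‖a‖ - ‖b‖) :=
              mul_le_mul_of_nonneg_right h8 h7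
            _ ≤ α * ‖a‖ ^ α * ‖a - b‖ := mul_le_mul_of_nonneg_left h6 h9
  calc ‖(‖a‖ ^ α) • a - (‖b‖ ^ α) • b‖
      ≤ ‖a‖ ^ α * ‖a - b‖ + (‖a‖ ^ α - ‖b‖ ^ α) * ‖b‖ := h4
    _ ≤ ‖a‖ ^ α * ‖a - b‖ + α * ‖a‖ ^ α * ‖a - b‖ := by linarith
    _ = (1 + α) * max ‖a‖ ‖b‖ ^ α * ‖a - b‖ := by rw [hmax]; ring

lemma vec_key {E : Type*} [NormedAddCommGroup E] [NormedSpace ℝ E]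
    {α : ℝ} (h0 : 0 ≤ α) (h1 : α ≤ 1) (a b : E) :
    ‖(‖a‖ ^ α) • a - (‖b‖ ^ α) • b‖ ≤ (1 + α) * max ‖a‖ ‖b‖ ^ α * ‖a - b‖ := by
  rcases le_total ‖b‖ ‖a‖ with h | h
  · exact vec_key_aux h0 h1 a b h
  · have := vec_key_aux h0 h1 b a h
    rwa [← norm_neg ((‖b‖ ^ α) • b - (‖a‖ ^ α) • a), neg_sub, ← norm_neg (b - a),
      neg_sub, max_comm] at this

/-- Composition identity: `H_{p-1} = F ∘ H_{p/2}` with `F ζ = ‖ζ‖^((p-2)/p) • ζ`. -/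
lemma Hfun_comp {n : ℕ} {p : ℝ} (hp : 2 ≤ p) (ξ : EuclideanSpace ℝ (Fin n)) :
    Hfun (p - 1) ξ = (‖Hfun (p / 2) ξ‖ ^ ((p - 2) / p)) • Hfun (p / 2) ξ := by
  have hp0 : (0:ℝ) < p := by linarith
  by_cases hξ : ξ = 0
  · simp [Hfun, hξ]
  · have hξn : (0:ℝ) < ‖ξ‖ := norm_pos_iff.mpr hξ
    set m : ℝ := max (‖ξ‖ - 1) 0 with hm
    have hm0 : 0 ≤ m := le_max_right _ _
    have hnorm : ‖Hfun (p / 2) ξ‖ = m ^ (p / 2) := by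
      rw [Hfun, if_neg hξ, norm_smul, norm_smul, Real.norm_eq_abs,
        abs_of_nonneg (by positivity), Real.norm_eq_abs, abs_of_nonneg (by positivity),
        inv_mul_cancel₀ hξn.ne', mul_one]
    have hsc : (m ^ (p / 2)) ^ ((p - 2) / p) * m ^ (p / 2) = m ^ (p - 1) := by
      rw [← Real.rpow_mul hm0, ← Real.rpow_add_of_nonneg hm0
        (mul_nonneg (by positivity) (div_nonneg (by linarith) hp0.le)) (by positivity)]
      congr 1
      field_simp
      ring
    rw [Hfun, if_neg hξ, hnorm, Hfun, if_neg hξ]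
    match_scalars
    rw [← hm, ← hsc]
    ring

/-- Let `2 ≤ p < ∞` and `n ∈ ℕ`. Then for every `ξ, η ∈ ℝ^n`,
`|H_{p−1}(ξ) − H_{p−1}(η)| ≤ (p−1) (|H_{p/2}(ξ)|^((p−2)/p) + |H_{p/2}(η)|^((p−2)/p))
  |H_{p/2}(ξ) − H_{p/2}(η)|`. -/
theorem stmt_3 (n : ℕ) (p : ℝ) (hp : 2 ≤ p) :
    ∀ ξ η : EuclideanSpace ℝ (Fin n),
      ‖Hfun (p - 1) ξ - Hfun (p - 1) η‖ ≤
        (p - 1) * (‖Hfun (p / 2) ξ‖ ^ ((p - 2) / p) + ‖Hfun (p / 2) η‖ ^ ((p - 2) / p)) *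
          ‖Hfun (p / 2) ξ - Hfun (p / 2) η‖ := by
  intro ξ η
  have hp0 : (0:ℝ) < p := by linarith
  set α : ℝ := (p - 2) / p with hα
  have h0 : 0 ≤ α := div_nonneg (by linarith) hp0.le
  have h1 : α ≤ 1 := by
    rw [hα, div_le_one hp0]; linarith
  set a := Hfun (p / 2) ξ with ha
  set b := Hfun (p / 2) η with hb
  rw [Hfun_comp hp ξ, Hfun_comp hp η]
  have key := vec_key (E := EuclideanSpace ℝ (Fin n)) h0 h1 a b
  have hmaxle : max ‖a‖ ‖b‖ ^ α ≤ ‖a‖ ^ α + ‖b‖ ^ α := by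
    rcases max_cases ‖a‖ ‖b‖ with ⟨h, _⟩ | ⟨h, _⟩ <;> rw [h]
    · nlinarith [Real.rpow_nonneg (norm_nonneg b) α]
    · nlinarith [Real.rpow_nonneg (norm_nonneg a) α]
  have hcoef : 1 + α ≤ p - 1 := by
    have h2 : α ≤ p - 2 := by
      rw [hα, div_le_iff₀ hp0]; nlinarith
    linarith
  calc ‖(‖a‖ ^ α) • a - (‖b‖ ^ α) • b‖
      ≤ (1 + α) * max ‖a‖ ‖b‖ ^ α * ‖a - b‖ := key
    _ ≤ (p - 1) * (‖a‖ ^ α + ‖b‖ ^ α) * ‖a - b‖ := by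
        apply mul_le_mul_of_nonneg_right _ (norm_nonneg _)
        apply mul_le_mul hcoef hmaxle (by positivity) (by linarith)
end

section
/- Let n ∈ ℕ and let α, ε be positive real numbers with α < ε. Then there exist positive constants β₁ = β₁(α,ε) and β₂ = β₂(α,ε,n) such that for every ξ, η ∈ ℝ^n one has β₁ |H_ε(ξ) − H_ε(η)| ≤ |H_α(ξ) − H_α(η)| · ( (|ξ|−1)_+^ε + (|η|−1)_+^ε )^{(ε−α)/ε} ≤ β₂ |H_ε(ξ) − H_ε(η)|. -/
open Real

theorem rpow_sub_rpow_mul_le {a b r : ℝ} (ha : 0 ≤ a) (hb : 0 ≤ b) (hr : 0 ≤ r) :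
    (a ^ r - b ^ r) * b ≤ r * a ^ r * (a - b) := by
  have hr1 : 0 < r + 1 := by linarith
  have amgm := geom_mean_le_arith_mean2_weighted (div_nonneg hr hr1.le) (inv_nonneg.2 hr1.le)
    (rpow_nonneg ha (r + 1)) (rpow_nonneg hb (r + 1)) (by field_simp)
  rw [← rpow_mul ha, ← rpow_mul hb, mul_div_cancel₀ r hr1.ne', mul_inv_cancel₀ hr1.ne',
    rpow_one] at amgm
  have amgm_cleared : (1 + r) * (a ^ r * b) ≤ r * a ^ (r + 1) + b ^ (r + 1) := by
    have := mul_le_mul_of_nonneg_left amgm hr1.le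
    field_simp at this
    linarith
  rw [rpow_add_of_nonneg ha hr zero_le_one, rpow_add_of_nonneg hb hr zero_le_one, rpow_one,
    rpow_one] at amgm_cleared
  linarith

theorem max_rpow_le_add_rpow_rpow_div {x y p q : ℝ} (hx : 0 ≤ x) (hy : 0 ≤ y) (hp : 0 < p)
    (hq : 0 ≤ q) : max x y ^ q ≤ (x ^ p + y ^ p) ^ (q / p) := by
  have hm : max x y ^ p ≤ x ^ p + y ^ p := by
    rw [rpow_max hx hy hp.le]
    rcases max_choice (x ^ p) (y ^ p) with h | h <;> rw [h] <;>
      linarith [rpow_nonneg hx p, rpow_nonneg hy p]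
  calc max x y ^ q = (max x y ^ p) ^ (q / p) := by
        rw [← rpow_mul (le_max_of_le_left hx), mul_div_cancel₀ q hp.ne']
    _ ≤ (x ^ p + y ^ p) ^ (q / p) :=
        rpow_le_rpow (rpow_nonneg (le_max_of_le_left hx) p) hm (div_nonneg hq hp.le)

theorem add_rpow_rpow_div_le {x y p q : ℝ} (hx : 0 ≤ x) (hy : 0 ≤ y) (hp : 0 < p) (hq : 0 ≤ q) :
    (x ^ p + y ^ p) ^ (q / p) ≤ 2 ^ (q / p) * max x y ^ q := by
  have hm0 : 0 ≤ max x y := le_max_of_le_left hx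
  have hm : x ^ p + y ^ p ≤ 2 * max x y ^ p := by
    linarith [rpow_le_rpow hx (le_max_left x y) hp.le, rpow_le_rpow hy (le_max_right x y) hp.le]
  calc (x ^ p + y ^ p) ^ (q / p) ≤ (2 * max x y ^ p) ^ (q / p) :=
        rpow_le_rpow (by positivity) hm (div_nonneg hq hp.le)
    _ = 2 ^ (q / p) * max x y ^ q := by
        rw [mul_rpow zero_le_two (rpow_nonneg hm0 p), ← rpow_mul hm0, mul_div_cancel₀ q hp.ne']

section RadialPower

variable {F : Type*}

noncomputable def radialRpow [Norm F] [SMul ℝ F] (r : ℝ) (x : F) : F := ‖x‖ ^ r • x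

theorem norm_radialRpow_sub_le_of_norm_le [SeminormedAddCommGroup F] [NormedSpace ℝ F]
    {r : ℝ} (hr : 0 ≤ r) {U V : F} (hVU : ‖V‖ ≤ ‖U‖) :
    ‖radialRpow r U - radialRpow r V‖ ≤ (1 + r) * ‖U‖ ^ r * ‖U - V‖ := by
  have hA : 0 ≤ ‖U‖ ^ r := rpow_nonneg (norm_nonneg U) r
  have hBA : ‖V‖ ^ r ≤ ‖U‖ ^ r := rpow_le_rpow (norm_nonneg V) hVU hr
  have hsplit : radialRpow r U - radialRpow r V
      = ‖U‖ ^ r • (U - V) + (‖U‖ ^ r - ‖V‖ ^ r) • V := by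
    simp only [radialRpow, smul_sub, sub_smul]; abel
  have hsub : ‖U‖ - ‖V‖ ≤ ‖U - V‖ := norm_sub_norm_le U V
  have hamgm := rpow_sub_rpow_mul_le (norm_nonneg U) (norm_nonneg V) hr
  calc ‖radialRpow r U - radialRpow r V‖
      ≤ ‖U‖ ^ r * ‖U - V‖ + (‖U‖ ^ r - ‖V‖ ^ r) * ‖V‖ := by
        rw [hsplit]
        refine (norm_add_le _ _).trans_eq ?_
        rw [norm_smul, norm_smul, norm_of_nonneg hA, norm_of_nonneg (sub_nonneg.2 hBA)]
    _ ≤ ‖U‖ ^ r * ‖U - V‖ + r * ‖U‖ ^ r * ‖U - V‖ := by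
        gcongr _ + ?_
        exact hamgm.trans (mul_le_mul_of_nonneg_left hsub (by positivity))
    _ = (1 + r) * ‖U‖ ^ r * ‖U - V‖ := by ring

theorem half_mul_norm_sub_sq_le_inner_smul_sub_smul [NormedAddCommGroup F]
    [InnerProductSpace ℝ F] {A B : ℝ} (hB : 0 ≤ B) (hBA : B ≤ A) {U V : F} (hVU : ‖V‖ ≤ ‖U‖) :
    A / 2 * ‖U - V‖ ^ 2 ≤ inner ℝ (A • U - B • V) (U - V) := by
  have hinner : inner ℝ (A • U - B • V) (U - V)
      = A * ‖U‖ ^ 2 + B * ‖V‖ ^ 2 - (A + B) * inner ℝ U V := by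
    simp only [inner_sub_left, inner_sub_right, real_inner_smul_left, real_inner_self_eq_norm_sq,
      real_inner_comm U V]
    ring
  rw [hinner, norm_sub_sq_real]
  have hCS := real_inner_le_norm U V
  nlinarith [mul_nonneg (sub_nonneg.2 hBA) (mul_nonneg (sub_nonneg.2 hVU)
    (add_nonneg (norm_nonneg U) (norm_nonneg V))), mul_nonneg hB (sq_nonneg (‖U‖ - ‖V‖)),
    mul_nonneg hB (sub_nonneg.2 hCS)]

theorem rpow_mul_norm_sub_le_of_norm_le [NormedAddCommGroup F] [InnerProductSpace ℝ F]
    {r : ℝ} (hr : 0 ≤ r) {U V : F} (hVU : ‖V‖ ≤ ‖U‖) :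
    ‖U‖ ^ r * ‖U - V‖ ≤ 2 * ‖radialRpow r U - radialRpow r V‖ := by
  rcases (norm_nonneg (U - V)).eq_or_lt with hD | hD
  · rw [← hD, mul_zero]; positivity
  have hmono := half_mul_norm_sub_sq_le_inner_smul_sub_smul (rpow_nonneg (norm_nonneg V) r)
    (rpow_le_rpow (norm_nonneg V) hVU hr) hVU
  have hCS := real_inner_le_norm (radialRpow r U - radialRpow r V) (U - V)
  rw [radialRpow, radialRpow] at *
  have hquad := hmono.trans hCS
  rw [sq] at hquad
  refine le_of_mul_le_mul_right ?_ hD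
  linarith

theorem norm_radialRpow_sub_le [SeminormedAddCommGroup F] [NormedSpace ℝ F]
    {r : ℝ} (hr : 0 ≤ r) (U V : F) :
    ‖radialRpow r U - radialRpow r V‖ ≤ (1 + r) * max ‖U‖ ‖V‖ ^ r * ‖U - V‖ := by
  rcases le_total ‖V‖ ‖U‖ with h | h
  · rw [max_eq_left h]; exact norm_radialRpow_sub_le_of_norm_le hr h
  · rw [max_eq_right h, norm_sub_rev, norm_sub_rev U]
    exact norm_radialRpow_sub_le_of_norm_le hr h

theorem max_rpow_mul_norm_sub_le [NormedAddCommGroup F] [InnerProductSpace ℝ F]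
    {r : ℝ} (hr : 0 ≤ r) (U V : F) :
    max ‖U‖ ‖V‖ ^ r * ‖U - V‖ ≤ 2 * ‖radialRpow r U - radialRpow r V‖ := by
  rcases le_total ‖V‖ ‖U‖ with h | h
  · rw [max_eq_left h]; exact rpow_mul_norm_sub_le_of_norm_le hr h
  · rw [max_eq_right h, norm_sub_rev, norm_sub_rev (radialRpow r U)]
    exact rpow_mul_norm_sub_le_of_norm_le hr h

theorem radialRpow_sub_comparable [NormedAddCommGroup F] [InnerProductSpace ℝ F]
    {p : ℝ} (hp : 1 ≤ p) (U V : F) :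
    p⁻¹ * ‖radialRpow (p - 1) U - radialRpow (p - 1) V‖ ≤
        ‖U - V‖ * (‖U‖ ^ p + ‖V‖ ^ p) ^ ((p - 1) / p) ∧
      ‖U - V‖ * (‖U‖ ^ p + ‖V‖ ^ p) ^ ((p - 1) / p) ≤
        2 ^ ((p - 1) / p) * 2 * ‖radialRpow (p - 1) U - radialRpow (p - 1) V‖ := by
  have hp0 : 0 < p := zero_lt_one.trans_le hp
  have hr : 0 ≤ p - 1 := sub_nonneg.2 hp
  have hS_lower := max_rpow_le_add_rpow_rpow_div (norm_nonneg U) (norm_nonneg V) hp0 hr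
  have hS_upper := add_rpow_rpow_div_le (norm_nonneg U) (norm_nonneg V) hp0 hr
  have hE_upper := norm_radialRpow_sub_le hr U V
  have hE_lower := max_rpow_mul_norm_sub_le hr U V
  rw [add_sub_cancel] at hE_upper
  constructor
  · rw [inv_mul_le_iff₀ hp0]
    calc _ ≤ p * max ‖U‖ ‖V‖ ^ (p - 1) * ‖U - V‖ := hE_upper
      _ ≤ p * (‖U‖ ^ p + ‖V‖ ^ p) ^ ((p - 1) / p) * ‖U - V‖ := by gcongr
      _ = _ := by ring
  · calc _ ≤ ‖U - V‖ * (2 ^ ((p - 1) / p) * max ‖U‖ ‖V‖ ^ (p - 1)) := by gcongr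
      _ = 2 ^ ((p - 1) / p) * (max ‖U‖ ‖V‖ ^ (p - 1) * ‖U - V‖) := by ring
      _ ≤ _ := by rw [mul_assoc]; gcongr

end RadialPower

theorem norm_Hfun {n : ℕ} {γ : ℝ} (hγ : γ ≠ 0) (ξ : EuclideanSpace ℝ (Fin n)) :
    ‖Hfun γ ξ‖ = max (‖ξ‖ - 1) 0 ^ γ := by
  unfold Hfun
  split_ifs with h
  · simp [h, zero_rpow hγ]
  · have hξ : ‖ξ‖ ≠ 0 := norm_ne_zero_iff.2 h
    rw [norm_smul, norm_smul, norm_inv, norm_norm, inv_mul_cancel₀ hξ, mul_one,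
      norm_of_nonneg (rpow_nonneg (le_max_right _ _) _)]

theorem norm_Hfun_rpow {n : ℕ} {α : ℝ} (hα : α ≠ 0) (ε : ℝ) (ξ : EuclideanSpace ℝ (Fin n)) :
    ‖Hfun α ξ‖ ^ (ε / α) = max (‖ξ‖ - 1) 0 ^ ε := by
  rw [norm_Hfun hα, ← rpow_mul (le_max_right _ _), mul_div_cancel₀ ε hα]

theorem Hfun_eq_radialRpow {n : ℕ} {α ε : ℝ} (hα : α ≠ 0) (hε : ε ≠ 0)
    (ξ : EuclideanSpace ℝ (Fin n)) : Hfun ε ξ = radialRpow (ε / α - 1) (Hfun α ξ) := by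
  by_cases h : ξ = 0
  · simp [Hfun, radialRpow, h]
  have hexp : ε / α - 1 + 1 ≠ 0 := by rw [sub_add_cancel]; exact div_ne_zero hε hα
  have hscalar : ‖Hfun α ξ‖ ^ (ε / α - 1) * max (‖ξ‖ - 1) 0 ^ α = max (‖ξ‖ - 1) 0 ^ ε := by
    rw [← norm_Hfun hα ξ, ← rpow_add_one' (norm_nonneg _) hexp, sub_add_cancel,
      norm_Hfun_rpow hα]
  rw [radialRpow]
  conv_rhs => arg 2; rw [Hfun, if_neg h]
  rw [smul_smul, hscalar, Hfun, if_neg h]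

theorem stmt_4_general (n : ℕ) (α ε : ℝ) (hα : 0 < α) (hαε : α < ε) :
    ∃ β₁ : ℝ, 0 < β₁ ∧ ∃ β₂ : ℝ, 0 < β₂ ∧ ∀ ξ η : EuclideanSpace ℝ (Fin n),
      β₁ * ‖Hfun ε ξ - Hfun ε η‖ ≤
        ‖Hfun α ξ - Hfun α η‖ *
          ((max (‖ξ‖ - 1) 0) ^ ε + (max (‖η‖ - 1) 0) ^ ε) ^ ((ε - α) / ε) ∧
      ‖Hfun α ξ - Hfun α η‖ *
          ((max (‖ξ‖ - 1) 0) ^ ε + (max (‖η‖ - 1) 0) ^ ε) ^ ((ε - α) / ε) ≤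
        β₂ * ‖Hfun ε ξ - Hfun ε η‖ := by
  have hε : ε ≠ 0 := (hα.trans hαε).ne'
  have hp : 1 ≤ ε / α := (one_le_div hα).2 hαε.le
  have hq : (ε - α) / ε = (ε / α - 1) / (ε / α) := by field_simp
  refine ⟨(ε / α)⁻¹, by positivity, 2 ^ ((ε / α - 1) / (ε / α)) * 2, by positivity,
    fun ξ η => ?_⟩
  rw [hq, ← norm_Hfun_rpow hα.ne' ε ξ, ← norm_Hfun_rpow hα.ne' ε η,
    Hfun_eq_radialRpow hα.ne' hε ξ, Hfun_eq_radialRpow hα.ne' hε η]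
  exact radialRpow_sub_comparable hp _ _

/-- Let `n ∈ ℕ` and `0 < α < ε`. Then there exist positive constants
`β₁ = β₁(α,ε)` and `β₂ = β₂(α,ε,n)` such that for every `ξ, η ∈ ℝ^n`,
`β₁ |H_ε(ξ) − H_ε(η)| ≤ |H_α(ξ) − H_α(η)| · ((|ξ|−1)₊^ε + (|η|−1)₊^ε)^((ε−α)/ε)
  ≤ β₂ |H_ε(ξ) − H_ε(η)|`. -/
theorem stmt_4 (n : ℕ) (α ε : ℝ) (hα : 0 < α) (hε : 0 < ε) (hαε : α < ε) :
    ∃ β₁ : ℝ, 0 < β₁ ∧ ∃ β₂ : ℝ, 0 < β₂ ∧ ∀ ξ η : EuclideanSpace ℝ (Fin n),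
      β₁ * ‖Hfun ε ξ - Hfun ε η‖ ≤
        ‖Hfun α ξ - Hfun α η‖ *
          ((max (‖ξ‖ - 1) 0) ^ ε + (max (‖η‖ - 1) 0) ^ ε) ^ ((ε - α) / ε) ∧
      ‖Hfun α ξ - Hfun α η‖ *
          ((max (‖ξ‖ - 1) 0) ^ ε + (max (‖η‖ - 1) 0) ^ ε) ^ ((ε - α) / ε) ≤
        β₂ * ‖Hfun ε ξ - Hfun ε η‖ :=
  stmt_4_general n α ε hα hαε
end

section
/- Let n ∈ ℕ, p ∈ (1, ∞), let Ω ⊆ ℝ^n be a measurable set, let a : Ω → ℝ be measurable with a(x) ≥ m for a.e. x ∈ Ω for some constant m > 0, and let F, G : Ω → ℝ^n be measurable vector fields. If ∫_Ω a(x) ⟨H_{p−1}(F(x)) − H_{p−1}(G(x)), F(x) − G(x)⟩ dx = 0 (the integrand being non-negative a.e.), then H_{p/2}(F(x)) = H_{p/2}(G(x)) for a.e. x ∈ Ω. -/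
open MeasureTheory
open scoped InnerProductSpace

section Radial

variable {E : Type*} [NormedAddCommGroup E] [InnerProductSpace ℝ E] {φ f : ℝ → ℝ} {ξ η : E}

noncomputable def radialMap (φ : ℝ → ℝ) (ξ : E) : E := (φ ‖ξ‖ / ‖ξ‖) • ξ

lemma norm_radialMap (hφ : 0 ≤ φ ‖ξ‖) (hξ : ξ ≠ 0) : ‖radialMap φ ξ‖ = φ ‖ξ‖ := by
  rw [radialMap, norm_smul, Real.norm_of_nonneg (div_nonneg hφ (norm_nonneg ξ)),
    div_mul_cancel₀ _ (norm_ne_zero_iff.2 hξ)]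

lemma radialMap_radialMap (hφ : ∀ t, 0 ≤ φ t) (hf : f 0 = 0) :
    radialMap f (radialMap φ ξ) = radialMap (f ∘ φ) ξ := by
  rcases eq_or_ne ξ 0 with rfl | hξ
  · simp [radialMap]
  rw [radialMap, norm_radialMap (hφ _) hξ, radialMap, smul_smul, radialMap, Function.comp_apply]
  congr 1
  rcases eq_or_ne (φ ‖ξ‖) 0 with h | h
  · simp [h, hf]
  · field_simp

lemma div_self_mul_self_of_map_zero (hφ0 : φ 0 = 0) (t : ℝ) : φ t / t * t = φ t := by
  rcases eq_or_ne t 0 with rfl | h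
  · simp [hφ0]
  · exact div_mul_cancel₀ _ h

lemma inner_radialMap_sub (hφ0 : φ 0 = 0) (ξ η : E) :
    ⟪radialMap φ ξ - radialMap φ η, ξ - η⟫_ℝ =
      (φ ‖ξ‖ / ‖ξ‖ + φ ‖η‖ / ‖η‖) * (‖ξ‖ * ‖η‖ - ⟪ξ, η⟫_ℝ) +
        (φ ‖ξ‖ - φ ‖η‖) * (‖ξ‖ - ‖η‖) := by
  have hξ := div_self_mul_self_of_map_zero hφ0 ‖ξ‖
  have hη := div_self_mul_self_of_map_zero hφ0 ‖η‖
  set A := φ ‖ξ‖ / ‖ξ‖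
  set B := φ ‖η‖ / ‖η‖
  rw [← hξ, ← hη]
  simp only [radialMap, inner_sub_left, inner_sub_right, real_inner_smul_left,
    real_inner_self_eq_norm_sq, real_inner_comm ξ η]
  ring

lemma radialMap_eq_of_inner_sub_nonpos (hφ : Monotone φ) (hφ0 : φ 0 = 0)
    (h : ⟪radialMap φ ξ - radialMap φ η, ξ - η⟫_ℝ ≤ 0) : radialMap φ ξ = radialMap φ η := by
  have hφnn : ∀ t : ℝ, 0 ≤ t → 0 ≤ φ t := fun t ht => hφ0 ▸ hφ ht
  have hcoeff : 0 ≤ φ ‖ξ‖ / ‖ξ‖ + φ ‖η‖ / ‖η‖ := by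
    have := hφnn _ (norm_nonneg ξ); have := hφnn _ (norm_nonneg η); positivity
  have hangle : 0 ≤ ‖ξ‖ * ‖η‖ - ⟪ξ, η⟫_ℝ := sub_nonneg.2 (real_inner_le_norm ξ η)
  have hmono : 0 ≤ (φ ‖ξ‖ - φ ‖η‖) * (‖ξ‖ - ‖η‖) := by
    rcases le_total ‖ξ‖ ‖η‖ with hle | hle
    · exact mul_nonneg_of_nonpos_of_nonpos (sub_nonpos.2 (hφ hle)) (sub_nonpos.2 hle)
    · exact mul_nonneg (sub_nonneg.2 (hφ hle)) (sub_nonneg.2 hle)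
  rw [inner_radialMap_sub hφ0] at h
  have hφeq : φ ‖ξ‖ = φ ‖η‖ := by
    rcases mul_eq_zero.1 (show (φ ‖ξ‖ - φ ‖η‖) * (‖ξ‖ - ‖η‖) = 0 by nlinarith) with h' | h'
    · exact sub_eq_zero.1 h'
    · rw [sub_eq_zero.1 h']
  rcases (hφnn _ (norm_nonneg ξ)).eq_or_lt with h0 | hpos
  · simp [radialMap, ← hφeq, ← h0]
  have hξ : ‖ξ‖ ≠ 0 := fun h' => hpos.ne' (by rw [h', hφ0])
  have hη : ‖η‖ ≠ 0 := fun h' => hpos.ne' (by rw [hφeq, h', hφ0])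
  have hcoeff_pos : 0 < φ ‖ξ‖ / ‖ξ‖ + φ ‖η‖ / ‖η‖ :=
    add_pos_of_pos_of_nonneg (by positivity) (div_nonneg (hφeq ▸ hpos.le) (norm_nonneg η))
  have hparallel : ‖η‖ • ξ = ‖ξ‖ • η := by
    refine inner_eq_norm_mul_iff_real.1 (le_antisymm (real_inner_le_norm ξ η) ?_)
    nlinarith
  calc radialMap φ ξ = (φ ‖ξ‖ / (‖ξ‖ * ‖η‖)) • (‖η‖ • ξ) := by
        rw [radialMap, smul_smul]; congr 1; field_simp
    _ = radialMap φ η := by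
        rw [hparallel, smul_smul, radialMap, hφeq]; congr 1; field_simp

end Radial

lemma monotone_posPart_sub_one_rpow {γ : ℝ} (hγ : 0 ≤ γ) :
    Monotone fun t : ℝ => max (t - 1) 0 ^ γ :=
  fun _ _ hst => Real.rpow_le_rpow (le_max_right _ _) (max_le_max (by linarith) le_rfl) hγ

lemma Hfun_eq_radialMap {n : ℕ} (γ : ℝ) :
    Hfun (n := n) γ = radialMap fun t => max (t - 1) 0 ^ γ := by
  funext ξ
  unfold Hfun radialMap
  split_ifs with h
  · simp [h]
  · rw [smul_smul, div_eq_mul_inv]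

lemma Hfun_eq_radialMap_Hfun {n : ℕ} {γ γ' : ℝ} (hγ : γ ≠ 0) (hγ' : γ' ≠ 0)
    (ξ : EuclideanSpace ℝ (Fin n)) :
    Hfun γ' ξ = radialMap (· ^ (γ' / γ)) (Hfun γ ξ) := by
  rw [Hfun_eq_radialMap, Hfun_eq_radialMap,
    radialMap_radialMap (fun _ => Real.rpow_nonneg (le_max_right _ _) _)
      (by simp [Real.zero_rpow (div_ne_zero hγ' hγ)])]
  congr 1
  funext t
  rw [Function.comp_apply, ← Real.rpow_mul (le_max_right _ _), mul_div_cancel₀ _ hγ]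

lemma Hfun_eq_of_inner_sub_nonpos {n : ℕ} {γ γ' : ℝ} (hγ : 0 < γ) (hγ' : γ' ≠ 0)
    {ξ η : EuclideanSpace ℝ (Fin n)} (h : ⟪Hfun γ ξ - Hfun γ η, ξ - η⟫_ℝ ≤ 0) :
    Hfun γ' ξ = Hfun γ' η := by
  rw [Hfun_eq_radialMap] at h
  rw [Hfun_eq_radialMap_Hfun hγ.ne' hγ', Hfun_eq_radialMap_Hfun hγ.ne' hγ', Hfun_eq_radialMap,
    radialMap_eq_of_inner_sub_nonpos (monotone_posPart_sub_one_rpow hγ.le)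
      (by simp [Real.zero_rpow hγ.ne']) h]

lemma measurable_Hfun {n : ℕ} (γ : ℝ) : Measurable (Hfun (n := n) γ) := by
  rw [Hfun_eq_radialMap]
  exact ((Measurable.max (measurable_id.sub_const 1) measurable_const).pow_const γ
    |>.comp measurable_norm |>.div measurable_norm).smul measurable_id

theorem stmt_12_general (n : ℕ) (p : ℝ) (hp : 1 < p)
    (Ω : Set (EuclideanSpace ℝ (Fin n)))
    (a : EuclideanSpace ℝ (Fin n) → ℝ) (ha : Measurable a)
    (m : ℝ) (hm : 0 < m) (ham : ∀ᵐ x ∂(volume.restrict Ω), m ≤ a x)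
    (F G : EuclideanSpace ℝ (Fin n) → EuclideanSpace ℝ (Fin n))
    (hF : Measurable F) (hG : Measurable G)
    (hint : ∫⁻ x in Ω,
        ENNReal.ofReal
          (a x * ⟪Hfun (p - 1) (F x) - Hfun (p - 1) (G x), F x - G x⟫_ℝ) = 0) :
    ∀ᵐ x ∂(volume.restrict Ω), Hfun (p / 2) (F x) = Hfun (p / 2) (G x) := by
  have hmeas : Measurable fun x =>
      ENNReal.ofReal (a x * ⟪Hfun (p - 1) (F x) - Hfun (p - 1) (G x), F x - G x⟫_ℝ) :=
    (ha.mul ((((measurable_Hfun _).comp hF).sub ((measurable_Hfun _).comp hG)).inner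
      (hF.sub hG))).ennreal_ofReal
  rw [lintegral_eq_zero_iff hmeas] at hint
  filter_upwards [hint, ham] with x (hx : ENNReal.ofReal _ = 0) hax
  refine Hfun_eq_of_inner_sub_nonpos (γ := p - 1) (by linarith) (by positivity) ?_
  exact nonpos_of_mul_nonpos_right (ENNReal.ofReal_eq_zero.1 hx) (hm.trans_le hax)

/-- Let `p ∈ (1, ∞)`, `Ω ⊆ ℝ^n` measurable, `a : Ω → ℝ` measurable
with `a ≥ m > 0` a.e. on `Ω`, and let `F, G : Ω → ℝ^n` be measurable. If
`∫_Ω a(x) ⟨H_{p−1}(F(x)) − H_{p−1}(G(x)), F(x) − G(x)⟩ dx = 0` (the integrand being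
non-negative a.e.), then `H_{p/2}(F(x)) = H_{p/2}(G(x))` for a.e. `x ∈ Ω`. -/
theorem stmt_12 (n : ℕ) (p : ℝ) (hp : 1 < p)
    (Ω : Set (EuclideanSpace ℝ (Fin n))) (hΩ : MeasurableSet Ω)
    (a : EuclideanSpace ℝ (Fin n) → ℝ) (ha : Measurable a)
    (m : ℝ) (hm : 0 < m) (ham : ∀ᵐ x ∂(volume.restrict Ω), m ≤ a x)
    (F G : EuclideanSpace ℝ (Fin n) → EuclideanSpace ℝ (Fin n))
    (hF : Measurable F) (hG : Measurable G)
    (hint : ∫⁻ x in Ω,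
        ENNReal.ofReal
          (a x * ⟪Hfun (p - 1) (F x) - Hfun (p - 1) (G x), F x - G x⟫_ℝ) = 0) :
    ∀ᵐ x ∂(volume.restrict Ω), Hfun (p / 2) (F x) = Hfun (p / 2) (G x) :=
  stmt_12_general n p hp Ω a ha m hm ham F G hF hG hint
end
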